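/- Let S be a metric space, C ≥ 0 and C₁ ≥ 0 real numbers, and let x : [0,1] → S and z : [0,1] → ℝ be maps such that: (i) for all s, t ∈ [0,1] with s ≤ t, the total variation of x on [s,t] is at most C·dist(x(s), x(t)); and (ii) for all s, t ∈ [0,1], |z(t) − z(s)| ≤ C₁·dist(x(s), x(t)). Consider the curve γ(t) = (x(t), z(t)) in the product S × ℝ equipped with the ℓ² product metric dist((a,u),(b,v)) = √(dist(a,b)² + (u−v)²). Then for all s, t ∈ [0,1] with s ≤ t: (1) dist(γ(s), γ(t)) ≤ √(1 + C₁²)·dist(x(s), x(t)); (2) the total variation of γ on [s,t] is at most √(1 + C₁²) times the total variation of x on [s,t]; (3) the total variation of γ on [s,t] is at most √(1 + C₁²)·C·dist(γ(s), γ(t)). -/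

import Mathlib

/-!
Hypothesis (ii) says that over each chord the `z`-increment is at most `C₁` times the
`x`-increment, so in the `ℓ²` metric every chord of `γ` is at most `√(1 + C₁²)` times the
corresponding chord of `x`. Summing over subdivisions gives the same comparison of variations,
and since the projection `γ ↦ x` is `1`-Lipschitz, `C · dist (x s) (x t) ≤ C · dist (γ s) (γ t)`.
-/

/-- The Legendrian lift `t ↦ (x t, z t)` of a plane curve, viewed in the `ℓ²` product metric
on `S × ℝ`. -/
noncomputable def legendrianLift {S : Type*} (x : ℝ → S) (z : ℝ → ℝ) : ℝ → WithLp 2 (S × ℝ) :=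
  fun t => (WithLp.equiv 2 (S × ℝ)).symm (x t, z t)

open scoped ENNReal

-- Mathlib's `WithLp.prod_dist_eq_of_L2` is only stated for seminormed groups.
theorem WithLp.prod_dist_eq_sqrt {α β : Type*} [PseudoMetricSpace α] [PseudoMetricSpace β]
    (a b : WithLp 2 (α × β)) :
    dist a b = √(dist a.fst b.fst ^ 2 + dist a.snd b.snd ^ 2) := by
  rw [WithLp.prod_dist_eq_add (by norm_num), Real.sqrt_eq_rpow]
  norm_num

theorem WithLp.prod_dist_le_sqrt_one_add_sq_mul {α β : Type*} [PseudoMetricSpace α]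
    [PseudoMetricSpace β] {K : ℝ} {a b : WithLp 2 (α × β)}
    (h : dist a.snd b.snd ≤ K * dist a.fst b.fst) :
    dist a b ≤ √(1 + K ^ 2) * dist a.fst b.fst := by
  have hsq : dist a.snd b.snd ^ 2 ≤ K ^ 2 * dist a.fst b.fst ^ 2 := by
    rw [← mul_pow]
    exact pow_le_pow_left₀ dist_nonneg h 2
  calc dist a b = √(dist a.fst b.fst ^ 2 + dist a.snd b.snd ^ 2) := prod_dist_eq_sqrt a b
    _ ≤ √((1 + K ^ 2) * dist a.fst b.fst ^ 2) := Real.sqrt_le_sqrt (by linarith)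
    _ = √(1 + K ^ 2) * dist a.fst b.fst := by
      rw [Real.sqrt_mul (by positivity), Real.sqrt_sq dist_nonneg]

theorem eVariationOn_le_mul_of_edist_le {α E F : Type*} [LinearOrder α] [PseudoEMetricSpace E]
    [PseudoEMetricSpace F] {f : α → E} {g : α → F} {s : Set α} {c : ℝ≥0∞}
    (h : ∀ u ∈ s, ∀ v ∈ s, edist (f u) (f v) ≤ c * edist (g u) (g v)) :
    eVariationOn f s ≤ c * eVariationOn g s := by
  refine iSup_le fun ⟨n, u, hu, us⟩ => ?_
  calc ∑ i ∈ Finset.range n, edist (f (u (i + 1))) (f (u i))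
      ≤ ∑ i ∈ Finset.range n, c * edist (g (u (i + 1))) (g (u i)) :=
        Finset.sum_le_sum fun i _ => h _ (us _) _ (us _)
    _ = c * ∑ i ∈ Finset.range n, edist (g (u (i + 1))) (g (u i)) := by rw [Finset.mul_sum]
    _ ≤ c * eVariationOn g s := by gcongr; exact eVariationOn.sum_le hu us

theorem eVariationOn_le_ofReal_mul_of_dist_le {α E F : Type*} [LinearOrder α]
    [PseudoMetricSpace E] [PseudoMetricSpace F] {f : α → E} {g : α → F} {s : Set α} {c : ℝ}
    (hc : 0 ≤ c) (h : ∀ u ∈ s, ∀ v ∈ s, dist (f u) (f v) ≤ c * dist (g u) (g v)) :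
    eVariationOn f s ≤ ENNReal.ofReal c * eVariationOn g s :=
  eVariationOn_le_mul_of_edist_le fun u hu v hv => by
    rw [edist_dist, edist_dist, ← ENNReal.ofReal_mul hc]
    exact ENNReal.ofReal_le_ofReal (h u hu v hv)

theorem legendrian_lift_lavrentiev_general
    {S : Type*} [MetricSpace S] (C C₁ : ℝ) (hC : 0 ≤ C)
    (x : ℝ → S) (z : ℝ → ℝ)
    (hx : ∀ s ∈ Set.Icc (0:ℝ) 1, ∀ t ∈ Set.Icc (0:ℝ) 1, s ≤ t →
      eVariationOn x (Set.Icc s t) ≤ ENNReal.ofReal (C * dist (x s) (x t)))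
    (hz : ∀ s ∈ Set.Icc (0:ℝ) 1, ∀ t ∈ Set.Icc (0:ℝ) 1, |z t - z s| ≤ C₁ * dist (x s) (x t)) :
    ∀ s ∈ Set.Icc (0:ℝ) 1, ∀ t ∈ Set.Icc (0:ℝ) 1, s ≤ t →
      (dist (legendrianLift x z s) (legendrianLift x z t) ≤
        Real.sqrt (1 + C₁ ^ 2) * dist (x s) (x t)) ∧
      (eVariationOn (legendrianLift x z) (Set.Icc s t) ≤
        ENNReal.ofReal (Real.sqrt (1 + C₁ ^ 2)) * eVariationOn x (Set.Icc s t)) ∧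
      (eVariationOn (legendrianLift x z) (Set.Icc s t) ≤
        ENNReal.ofReal (Real.sqrt (1 + C₁ ^ 2) * C *
          dist (legendrianLift x z s) (legendrianLift x z t))) := by
  set γ := legendrianLift x z
  have hγ : ∀ u ∈ Set.Icc (0:ℝ) 1, ∀ v ∈ Set.Icc (0:ℝ) 1,
      dist (γ u) (γ v) ≤ √(1 + C₁ ^ 2) * dist (x u) (x v) := by
    intro u hu v hv
    apply WithLp.prod_dist_le_sqrt_one_add_sq_mul
    simpa [γ, legendrianLift, Real.dist_eq, abs_sub_comm] using hz u hu v hv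
  intro s hs t ht hst
  have hsub : Set.Icc s t ⊆ Set.Icc 0 1 := Set.Icc_subset_Icc hs.1 ht.2
  have hvar : eVariationOn γ (Set.Icc s t) ≤
      ENNReal.ofReal (√(1 + C₁ ^ 2)) * eVariationOn x (Set.Icc s t) :=
    eVariationOn_le_ofReal_mul_of_dist_le (Real.sqrt_nonneg _)
      fun u hu v hv => hγ u (hsub hu) v (hsub hv)
  refine ⟨hγ s hs t ht, hvar, ?_⟩
  calc eVariationOn γ (Set.Icc s t)
      ≤ ENNReal.ofReal (√(1 + C₁ ^ 2)) * ENNReal.ofReal (C * dist (x s) (x t)) :=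
        hvar.trans (by gcongr; exact hx s hs t ht hst)
    _ = ENNReal.ofReal (√(1 + C₁ ^ 2) * C * dist (x s) (x t)) := by
        rw [← ENNReal.ofReal_mul (Real.sqrt_nonneg _), mul_assoc]
    _ ≤ ENNReal.ofReal (√(1 + C₁ ^ 2) * C * dist (γ s) (γ t)) := by
        gcongr
        exact WithLp.dist_fst_le (γ s) (γ t)

/-- If the projection `x` is `C`-Lavrentiev on `[0,1]` and the increments of `z` are bounded
by `C₁` times the distance of the corresponding projections, then for the lifted curve
`γ = (x, z)` in the `ℓ²` product metric: (1) `dist(γ s, γ t) ≤ √(1+C₁²)·dist(x s, x t)`;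
(2) the variation of `γ` on `[s,t]` is at most `√(1+C₁²)` times that of `x`; and (3) `γ` is
`√(1+C₁²)·C`-Lavrentiev. -/
theorem legendrian_lift_lavrentiev
    {S : Type*} [MetricSpace S] (C C₁ : ℝ) (hC : 0 ≤ C) (hC₁ : 0 ≤ C₁)
    (x : ℝ → S) (z : ℝ → ℝ)
    (hx : ∀ s ∈ Set.Icc (0:ℝ) 1, ∀ t ∈ Set.Icc (0:ℝ) 1, s ≤ t →
      eVariationOn x (Set.Icc s t) ≤ ENNReal.ofReal (C * dist (x s) (x t)))
    (hz : ∀ s ∈ Set.Icc (0:ℝ) 1, ∀ t ∈ Set.Icc (0:ℝ) 1, |z t - z s| ≤ C₁ * dist (x s) (x t)) :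
    ∀ s ∈ Set.Icc (0:ℝ) 1, ∀ t ∈ Set.Icc (0:ℝ) 1, s ≤ t →
      (dist (legendrianLift x z s) (legendrianLift x z t) ≤
        Real.sqrt (1 + C₁ ^ 2) * dist (x s) (x t)) ∧
      (eVariationOn (legendrianLift x z) (Set.Icc s t) ≤
        ENNReal.ofReal (Real.sqrt (1 + C₁ ^ 2)) * eVariationOn x (Set.Icc s t)) ∧
      (eVariationOn (legendrianLift x z) (Set.Icc s t) ≤
        ENNReal.ofReal (Real.sqrt (1 + C₁ ^ 2) * C *
          dist (legendrianLift x z s) (legendrianLift x z t))) :=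
  legendrian_lift_lavrentiev_general C C₁ hC x z hx hz
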